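/- Every element of L_1 is an eigenvector of Δ_h with eigenvalue −1, and for each k ≥ 2 every element of L_k is an eigenvector of Δ_h with eigenvalue −p^{k−1}; moreover each L_k is a nonzero (indeed infinite-dimensional) closed subspace of ℓ²(X). -/

import Mathlib

/-!
Splitting a cube of rank `s + 1` into `ν` cubes of rank `s`, a function `ψ ∈ L_{K+1}` has zero
sum on every cube of rank `≥ K + 1`, while it is constant on cubes of rank `≤ K`. Hence in the
series for `(Δ_h ψ)(x)` the terms `r ≤ K` vanish (the cube average reproduces `ψ x`) and the
terms `r > K` equal `-a_r ψ(x)`; the geometric tail sums to `-p^K ψ(x)`.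
`L_{K+1}` is an intersection of kernels of continuous functionals (point evaluations and finite
cube sums), hence a closed subspace. It is infinite-dimensional: each of the infinitely many
disjoint cubes of rank `K + 1` supports a nonzero element of `L_{K+1}`, constant on its subcubes
of rank `K` with values summing to zero.
-/

noncomputable section
open scoped ENNReal

def HX (ν : ℕ) : Type := {x : ℕ → Fin ν // ∃ N, ∀ n, N ≤ n → (x n : ℕ) = 0}
instance (ν : ℕ) : DecidableEq (HX ν) := Classical.decEq _
abbrev Hl2 (ν : ℕ) : Type := lp (fun _ : HX ν => ℝ) 2
def cube (ν : ℕ) (r : ℕ) (x : HX ν) : Set (HX ν) := {y | ∀ n, r ≤ n → y.1 n = x.1 n}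
def cubeSum (ν r : ℕ) (x : HX ν) (ψ : Hl2 ν) : ℝ := ∑' y : cube ν r x, ψ y
def IsHierLap (ν : ℕ) (p : ℝ) (Δ : Hl2 ν →L[ℝ] Hl2 ν) : Prop :=
  ∀ ψ x, Δ ψ x = ∑' r : ℕ,
    (1 - p) * p ^ r * (((ν : ℝ) ^ (r + 1))⁻¹ * cubeSum ν (r + 1) x ψ - ψ x)
/-- `Lspace ν k` for `k ≥ 1`: functions constant on every cube of rank `k-1`
whose sum over every cube of rank `k` vanishes.  (For `k = 1` the first
condition is vacuous since cubes of rank `0` are singletons.) -/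
def Lspace (ν k : ℕ) : Set (Hl2 ν) :=
  {ψ | (∀ x y, y ∈ cube ν (k - 1) x → ψ y = ψ x) ∧ ∀ x, cubeSum ν k x ψ = 0}

section

variable {ν : ℕ}

namespace HX

def ofAgree (x : HX ν) (r : ℕ) (y : ℕ → Fin ν) (h : ∀ n, r ≤ n → y n = x.1 n) :
    HX ν :=
  ⟨y, let ⟨N, hN⟩ := x.2
    ⟨max N r, fun n hn =>
      (congrArg Fin.val (h n (le_of_max_le_right hn))).trans (hN n (le_of_max_le_left hn))⟩⟩

def update (x : HX ν) (s : ℕ) (j : Fin ν) : HX ν :=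
  x.ofAgree (s + 1) (Function.update x.1 s j) fun _ hn => Function.update_of_ne (by omega) _ _

end HX

lemma mem_cube_ofAgree (x : HX ν) (r : ℕ) (y : ℕ → Fin ν)
    (h : ∀ n, r ≤ n → y n = x.1 n) :
    x.ofAgree r y h ∈ cube ν r x := h

lemma mem_cube_self (r : ℕ) (x : HX ν) : x ∈ cube ν r x := fun _ _ => rfl

lemma mem_cube_comm {r : ℕ} {x y : HX ν} : y ∈ cube ν r x ↔ x ∈ cube ν r y :=
  ⟨fun h n hn => (h n hn).symm, fun h n hn => (h n hn).symm⟩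

lemma mem_cube_trans {r : ℕ} {x y z : HX ν} (hy : y ∈ cube ν r x) (hz : z ∈ cube ν r y) :
    z ∈ cube ν r x := fun n hn => (hz n hn).trans (hy n hn)

lemma cube_mono {r s : ℕ} (h : r ≤ s) (x : HX ν) : cube ν r x ⊆ cube ν s x :=
  fun _ hy n hn => hy n (h.trans hn)

def cubeEquivFun (r : ℕ) (x : HX ν) : cube ν r x ≃ (Fin r → Fin ν) where
  toFun y i := y.1.1 i
  invFun f := ⟨x.ofAgree r (fun n => if h : n < r then f ⟨n, h⟩ else x.1 n)
      fun n hn => dif_neg (by omega), mem_cube_ofAgree x r _ _⟩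
  left_inv y := by
    refine Subtype.ext <| Subtype.ext <| funext fun n => ?_
    show (if h : n < r then _ else _) = _
    split_ifs with h
    · rfl
    · exact (y.2 n (by omega)).symm
  right_inv f := by
    funext i
    exact dif_pos i.2

instance (r : ℕ) (x : HX ν) : Fintype (cube ν r x) := .ofEquiv _ (cubeEquivFun r x).symm

lemma card_cube (r : ℕ) (x : HX ν) : Fintype.card (cube ν r x) = ν ^ r := by
  simp [Fintype.card_congr (cubeEquivFun r x)]

lemma cubeSum_eq_sum (r : ℕ) (x : HX ν) (ψ : Hl2 ν) :
    cubeSum ν r x ψ = ∑ y : cube ν r x, ψ y := tsum_fintype _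

lemma cubeSum_eq_of_forall_eq {r : ℕ} {x : HX ν} {ψ : Hl2 ν} {a : ℝ}
    (h : ∀ y ∈ cube ν r x, ψ y = a) : cubeSum ν r x ψ = ν ^ r * a := by
  rw [cubeSum_eq_sum, Finset.sum_congr rfl fun (y : cube ν r x) _ => h y y.2]
  rw [Finset.sum_const, Finset.card_univ, card_cube, nsmul_eq_mul, Nat.cast_pow]

lemma update_mem_cube (x : HX ν) (s : ℕ) (j : Fin ν) : x.update s j ∈ cube ν (s + 1) x :=
  mem_cube_ofAgree x _ _ _

lemma update_apply_self (x : HX ν) (s : ℕ) (j : Fin ν) : (x.update s j).1 s = j :=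
  Function.update_self ..

lemma mem_cube_update_iff {s : ℕ} {x y : HX ν} {j : Fin ν} :
    y ∈ cube ν s (x.update s j) ↔ y ∈ cube ν (s + 1) x ∧ y.1 s = j := by
  refine ⟨fun h => ⟨mem_cube_trans (update_mem_cube x s j) (cube_mono s.le_succ _ h),
    (h s le_rfl).trans (update_apply_self x s j)⟩, fun ⟨h, hj⟩ n hn => ?_⟩
  rcases hn.eq_or_lt with rfl | hlt
  · exact hj.trans (update_apply_self x s j).symm
  · exact (h n hlt).trans (Function.update_of_ne (by omega) _ _).symm

def cubeSuccEquiv (s : ℕ) (x : HX ν) :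
    (Σ j : Fin ν, cube ν s (x.update s j)) ≃ cube ν (s + 1) x where
  toFun q := ⟨q.2, (mem_cube_update_iff.1 q.2.2).1⟩
  invFun y := ⟨y.1.1 s, y.1, mem_cube_update_iff.2 ⟨y.2, rfl⟩⟩
  left_inv := by
    rintro ⟨j, y, hy⟩
    obtain rfl := (mem_cube_update_iff.1 hy).2
    rfl
  right_inv _ := rfl

lemma cubeSum_succ (s : ℕ) (x : HX ν) (ψ : Hl2 ν) :
    cubeSum ν (s + 1) x ψ = ∑ j : Fin ν, cubeSum ν s (x.update s j) ψ := by
  simp only [cubeSum_eq_sum]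
  rw [← (cubeSuccEquiv s x).sum_comp, Fintype.sum_sigma]
  rfl

lemma cubeSum_eq_zero_of_le {k s : ℕ} {ψ : Hl2 ν} (h : ∀ x, cubeSum ν k x ψ = 0)
    (hks : k ≤ s) (x : HX ν) : cubeSum ν s x ψ = 0 := by
  induction s, hks using Nat.le_induction generalizing x with
  | base => exact h x
  | succ s _ ih => rw [cubeSum_succ]; exact Finset.sum_eq_zero fun j _ => ih _

theorem hierLap_apply_of_mem_Lspace {p : ℝ} (hp0 : 0 < p) (hp1 : p < 1)
    {Δ : Hl2 ν →L[ℝ] Hl2 ν} (hΔ : IsHierLap ν p Δ) {K : ℕ} {ψ : Hl2 ν}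
    (hψ : ψ ∈ Lspace ν (K + 1)) : Δ ψ = (-(p ^ K)) • ψ := by
  obtain ⟨hconst, hsum⟩ := hψ
  ext x
  rw [hΔ, lp.coeFn_smul, Pi.smul_apply, smul_eq_mul]
  have hν : (ν : ℝ) ≠ 0 := Nat.cast_ne_zero.2 (Fin.pos (x.1 0)).ne'
  refine HasSum.tsum_eq <| (hasSum_nat_add_iff' K).1 ?_
  have head : ∑ r ∈ Finset.range K,
      (1 - p) * p ^ r * (((ν : ℝ) ^ (r + 1))⁻¹ * cubeSum ν (r + 1) x ψ - ψ x) = 0 := by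
    refine Finset.sum_eq_zero fun r hr => ?_
    have hrK : r + 1 ≤ K + 1 - 1 := by simpa using hr
    rw [cubeSum_eq_of_forall_eq fun y hy => hconst x y (cube_mono hrK x hy)]
    field_simp
    ring
  have tail : ∀ n, (1 - p) * p ^ (n + K) *
      (((ν : ℝ) ^ (n + K + 1))⁻¹ * cubeSum ν (n + K + 1) x ψ - ψ x) =
      -((1 - p) * p ^ K * ψ x) * p ^ n := fun n => by
    rw [cubeSum_eq_zero_of_le hsum (by omega) x]
    ring
  rw [head, sub_zero]
  simp only [tail]
  have hp : (1 : ℝ) - p ≠ 0 := (sub_pos.2 hp1).ne'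
  have geom := (hasSum_geometric_of_lt_one hp0.le hp1).mul_left (-((1 - p) * p ^ K * ψ x))
  rwa [show -((1 - p) * p ^ K * ψ x) * (1 - p)⁻¹ = -p ^ K * ψ x by field_simp] at geom

abbrev evalCLM (x : HX ν) : Hl2 ν →L[ℝ] ℝ := lp.evalCLM ℝ (fun _ => ℝ) 2 x

@[simp] lemma evalCLM_apply (x : HX ν) (ψ : Hl2 ν) : evalCLM x ψ = ψ x := rfl

def cubeSumCLM (r : ℕ) (x : HX ν) : Hl2 ν →L[ℝ] ℝ :=
  ∑ y : cube ν r x, evalCLM (y : HX ν)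

lemma cubeSumCLM_apply (r : ℕ) (x : HX ν) (ψ : Hl2 ν) :
    cubeSumCLM r x ψ = cubeSum ν r x ψ := by
  rw [cubeSum_eq_sum, cubeSumCLM, sum_apply]
  rfl

def Lsubmodule (ν k : ℕ) : Submodule ℝ (Hl2 ν) :=
  (⨅ (x : HX ν) (y : HX ν) (_ : y ∈ cube ν (k - 1) x),
      LinearMap.ker ((evalCLM y - evalCLM x : Hl2 ν →L[ℝ] ℝ) : Hl2 ν →ₗ[ℝ] ℝ)) ⊓
    ⨅ x : HX ν, LinearMap.ker (cubeSumCLM k x : Hl2 ν →ₗ[ℝ] ℝ)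

lemma coe_Lsubmodule (k : ℕ) : (Lsubmodule ν k : Set (Hl2 ν)) = Lspace ν k := by
  ext ψ
  simp [Lsubmodule, Lspace, cubeSumCLM_apply, sub_eq_zero, and_comm]

lemma isClosed_Lsubmodule (k : ℕ) : IsClosed (Lsubmodule ν k : Set (Hl2 ν)) := by
  simp only [Lsubmodule, Submodule.coe_inf, Submodule.coe_iInf]
  exact .inter
    (isClosed_iInter fun _ => isClosed_iInter fun _ => isClosed_iInter fun _ =>
      ContinuousLinearMap.isClosed_ker _)
    (isClosed_iInter fun _ => ContinuousLinearMap.isClosed_ker _)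

open Classical in
def cubeProfile (x : HX ν) (K : ℕ) (c : Fin ν → ℝ) : Hl2 ν :=
  ⟨fun z => if z ∈ cube ν (K + 1) x then c (z.1 K) else 0,
    (memℓp_zero ((Set.toFinite (cube ν (K + 1) x)).subset fun _ hz =>
      by_contra fun h => hz (if_neg h))).of_exponent_ge zero_le⟩

open Classical in
lemma cubeProfile_apply (x : HX ν) (K : ℕ) (c : Fin ν → ℝ) (z : HX ν) :
    cubeProfile x K c z = if z ∈ cube ν (K + 1) x then c (z.1 K) else 0 := rfl

lemma cubeProfile_mem_Lspace (x : HX ν) (K : ℕ) {c : Fin ν → ℝ} (hc : ∑ j, c j = 0) :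
    cubeProfile x K c ∈ Lspace ν (K + 1) := by
  refine ⟨fun z y hy => ?_, fun z => ?_⟩
  · have hmem : y ∈ cube ν (K + 1) x ↔ z ∈ cube ν (K + 1) x :=
      ⟨fun h => mem_cube_trans h (cube_mono K.le_succ _ (mem_cube_comm.1 hy)),
        fun h => mem_cube_trans h (cube_mono K.le_succ _ hy)⟩
    have hK : y.1 K = z.1 K := hy K le_rfl
    rw [cubeProfile_apply, cubeProfile_apply, hK]
    congr 1
    exact propext hmem
  by_cases hz : z ∈ cube ν (K + 1) x
  · have hsub (j : Fin ν) : cubeSum ν K (z.update K j) (cubeProfile x K c) = ν ^ K * c j :=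
      cubeSum_eq_of_forall_eq fun y hy => by
        obtain ⟨hzy, rfl⟩ := mem_cube_update_iff.1 hy
        exact if_pos (mem_cube_trans hz hzy)
    simp only [cubeSum_succ, hsub, ← Finset.mul_sum, hc, mul_zero]
  · rw [cubeSum_eq_of_forall_eq (a := 0) fun y hy =>
      if_neg fun hyx => hz (mem_cube_trans hyx (mem_cube_comm.1 hy)), mul_zero]

def HX.spike [NeZero ν] (n : ℕ) : HX ν :=
  ⟨Pi.single n 1, n + 1, fun m hm => by simp [show m ≠ n by omega]⟩

lemma spike_apply_of_ne [NeZero ν] {m n : ℕ} (h : m ≠ n) :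
    (HX.spike (ν := ν) n).1 m = 0 :=
  Pi.single_eq_of_ne h _

lemma spike_mem_cube_spike_iff [NeZero ν] [NeZero (1 : Fin ν)] {r m n : ℕ} (hn : r ≤ n) :
    HX.spike m ∈ cube ν r (HX.spike n) ↔ m = n := by
  refine ⟨fun h => by_contra fun hmn => ?_, fun h => h ▸ mem_cube_self r _⟩
  have := h n hn
  rw [spike_apply_of_ne (Ne.symm hmn)] at this
  exact zero_ne_one (this.trans (Pi.single_eq_same n 1))

lemma linearIndependent_cubeProfile_spike [NeZero ν] [NeZero (1 : Fin ν)] (K : ℕ)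
    {c : Fin ν → ℝ} (hc : c 0 = 1) :
    LinearIndependent ℝ fun m : ℕ => cubeProfile (HX.spike (K + 1 + m)) K c := by
  refine .of_comp (LinearMap.pi fun n => (evalCLM (HX.spike (ν := ν) (K + 1 + n)) :
    Hl2 ν →ₗ[ℝ] ℝ)) ?_
  have hK (n : ℕ) : (HX.spike (ν := ν) (K + 1 + n)).1 K = 0 := spike_apply_of_ne (by omega)
  have hcomp : (LinearMap.pi fun n => (evalCLM (HX.spike (ν := ν) (K + 1 + n)) :
      Hl2 ν →ₗ[ℝ] ℝ)) ∘ (fun m : ℕ => cubeProfile (HX.spike (K + 1 + m)) K c) =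
      fun m => Pi.single m 1 := by
    funext m n
    simp [cubeProfile_apply, spike_mem_cube_spike_iff, Pi.single_apply, hK, hc]
  rw [hcomp]
  exact Pi.linearIndependent_single_one ℕ ℝ

theorem not_finiteDimensional_Lsubmodule (hν : 2 ≤ ν) (K : ℕ) :
    ¬ FiniteDimensional ℝ (Lsubmodule ν (K + 1)) := by
  obtain ⟨n, rfl⟩ : ∃ n, ν = n + 2 := ⟨ν - 2, by omega⟩
  intro _
  let c : Fin (n + 2) → ℝ := Pi.single 0 1 - Pi.single 1 1
  have hc0 : c 0 = 1 := by simp [c]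
  have hc : ∑ j, c j = 0 := by simp [c]
  set L := Lsubmodule (n + 2) (K + 1)
  have hmem (m : ℕ) : cubeProfile (HX.spike (K + 1 + m)) K c ∈ L := by
    rw [← SetLike.mem_coe, coe_Lsubmodule]
    exact cubeProfile_mem_Lspace _ K hc
  exact Module.Finite.not_linearIndependent_of_infinite (fun m => (⟨_, hmem m⟩ : L))
    (.of_comp L.subtype (linearIndependent_cubeProfile_spike K hc0))

end

theorem stmt1 (ν : ℕ) (hν : 2 ≤ ν) (p : ℝ) (hp0 : 0 < p) (hp1 : p < 1)
    (Δ : Hl2 ν →L[ℝ] Hl2 ν) (hΔ : IsHierLap ν p Δ) :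
    ∀ k : ℕ, 1 ≤ k →
      ((∀ ψ : Hl2 ν, ψ ∈ Lspace ν k → Δ ψ = (-(p ^ (k - 1))) • ψ) ∧
        ∃ L : Submodule ℝ (Hl2 ν), (L : Set (Hl2 ν)) = Lspace ν k ∧
          IsClosed (L : Set (Hl2 ν)) ∧ L ≠ ⊥ ∧ ¬ FiniteDimensional ℝ L) := by
  intro k hk
  obtain ⟨K, rfl⟩ : ∃ K, k = K + 1 := ⟨k - 1, by omega⟩
  have hinf := not_finiteDimensional_Lsubmodule hν K
  refine ⟨fun ψ hψ => hierLap_apply_of_mem_Lspace hp0 hp1 hΔ hψ, Lsubmodule ν (K + 1),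
    coe_Lsubmodule _, isClosed_Lsubmodule _, fun hbot => hinf ?_, hinf⟩
  rw [hbot]
  infer_instance
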